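/- Let $\Sigma_1, \ldots, \Sigma_I$ be finite subsets of $\mathbb{Z}^N$. Define $\mathrm{codim}(\Sigma_{j_1},\ldots,\Sigma_{j_p}) = p - \dim \mathrm{conv}(\Sigma_{j_1} + \cdots + \Sigma_{j_p})$. Then there exists a unique minimal (with respect to inclusion) subset $\{i_1, \ldots, i_J\} \subseteq \{1, \ldots, I\}$ such that $\mathrm{codim}(\Sigma_{i_1}, \ldots, \Sigma_{i_J}) = \max_{\{j_1,\ldots,j_p\} \subseteq \{1,\ldots,I\}} \mathrm{codim}(\Sigma_{j_1}, \ldots, \Sigma_{j_p})$; in particular the subcollection $\Sigma_{i_1}, \ldots, \Sigma_{i_J}$ is essential (every proper subcollection of it has strictly smaller codimension). -/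
import Mathlib


open Pointwise

def ι {N : ℕ} (x : Fin N → ℤ) : Fin N → ℝ := fun j => (x j : ℝ)

/-- The codimension of a subcollection: `|J| - dim conv(∑_{j ∈ J} Σ_j)`
(the empty subcollection has codimension `0`). -/
noncomputable def subCodim {N I : ℕ} (Sg : Fin I → Finset (Fin N → ℤ))
    (J : Finset (Fin I)) : ℤ :=
  (J.card : ℤ) -
    (Module.finrank ℝ (vectorSpan ℝ (∑ j ∈ J, (ι '' (Sg j : Set (Fin N → ℤ))))) : ℤ)

section aux

variable {V : Type*} [AddCommGroup V] [Module ℝ V]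

lemma vectorSpan_set_add {s t : Set V} (hs : s.Nonempty) (ht : t.Nonempty) :
    vectorSpan ℝ (s + t) = vectorSpan ℝ s ⊔ vectorSpan ℝ t := by
  apply le_antisymm
  · rw [vectorSpan_def, Submodule.span_le]
    rintro v hv
    rw [Set.mem_vsub] at hv
    obtain ⟨x, hx, y, hy, rfl⟩ := hv
    obtain ⟨a, ha, b, hb, rfl⟩ := hx
    obtain ⟨a', ha', b', hb', rfl⟩ := hy
    have : a + b -ᵥ (a' + b') = (a - a') + (b - b') := by
      simp [vsub_eq_sub]; abel
    rw [SetLike.mem_coe, this]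
    exact Submodule.add_mem_sup
      (vsub_mem_vectorSpan ℝ ha ha') (vsub_mem_vectorSpan ℝ hb hb')
  · apply sup_le
    · rw [vectorSpan_def, Submodule.span_le]
      rintro v hv
      rw [Set.mem_vsub] at hv
      obtain ⟨a, ha, a', ha', rfl⟩ := hv
      obtain ⟨b, hb⟩ := ht
      have : a -ᵥ a' = (a + b) -ᵥ (a' + b) := by simp [vsub_eq_sub]
      rw [SetLike.mem_coe, this]
      exact vsub_mem_vectorSpan ℝ (Set.add_mem_add ha hb) (Set.add_mem_add ha' hb)
    · rw [vectorSpan_def, Submodule.span_le]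
      rintro v hv
      rw [Set.mem_vsub] at hv
      obtain ⟨b, hb, b', hb', rfl⟩ := hv
      obtain ⟨a, ha⟩ := hs
      have : b -ᵥ b' = (a + b) -ᵥ (a + b') := by simp [vsub_eq_sub]
      rw [SetLike.mem_coe, this]
      exact vsub_mem_vectorSpan ℝ (Set.add_mem_add ha hb) (Set.add_mem_add ha hb')

omit [Module ℝ V] in
lemma sum_set_nonempty {κ : Type*} (J : Finset κ) (A : κ → Set V)
    (hA : ∀ j, (A j).Nonempty) : (∑ j ∈ J, A j).Nonempty := by
  induction J using Finset.cons_induction with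
  | empty => exact ⟨0, by simp [Set.mem_zero]⟩
  | cons a s ha ih =>
    rw [Finset.sum_cons]
    exact (hA a).add ih

lemma vectorSpan_sum {κ : Type*} (J : Finset κ) (A : κ → Set V)
    (hA : ∀ j, (A j).Nonempty) :
    vectorSpan ℝ (∑ j ∈ J, A j) = J.sup (fun j => vectorSpan ℝ (A j)) := by
  induction J using Finset.cons_induction with
  | empty =>
    simp only [Finset.sum_empty, Finset.sup_empty]
    have : (0 : Set V) = {(0 : V)} := rfl
    rw [this, vectorSpan_singleton]
  | cons a s ha ih =>
    rw [Finset.sum_cons, Finset.sup_cons,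
      vectorSpan_set_add (hA a) (sum_set_nonempty s A hA), ih]

end aux

lemma subCodim_supermodular {N I : ℕ} (Sg : Fin I → Finset (Fin N → ℤ))
    (hSg : ∀ i, (Sg i).Nonempty) (J K : Finset (Fin I)) :
    subCodim Sg J + subCodim Sg K ≤ subCodim Sg (J ∪ K) + subCodim Sg (J ∩ K) := by
  classical
  set A : Fin I → Set (Fin N → ℝ) := fun j => ι '' (Sg j : Set (Fin N → ℤ)) with hA
  have hAne : ∀ j, (A j).Nonempty := fun j =>
    ((hSg j).to_set.image _ : ((ι '' (Sg j : Set (Fin N → ℤ)))).Nonempty)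
  set W : Fin I → Submodule ℝ (Fin N → ℝ) := fun j => vectorSpan ℝ (A j) with hW
  have hvs : ∀ L : Finset (Fin I),
      vectorSpan ℝ (∑ j ∈ L, (ι '' (Sg j : Set (Fin N → ℤ)))) = L.sup W :=
    fun L => vectorSpan_sum L A hAne
  -- rank submodularity
  have hsub : (Module.finrank ℝ ↥((J ∪ K).sup W) : ℤ)
      + (Module.finrank ℝ ↥((J ∩ K).sup W) : ℤ)
      ≤ (Module.finrank ℝ ↥(J.sup W) : ℤ) + (Module.finrank ℝ ↥(K.sup W) : ℤ) := by
    have h1 : (J ∪ K).sup W = J.sup W ⊔ K.sup W := Finset.sup_union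
    have h2 : (J ∩ K).sup W ≤ J.sup W ⊓ K.sup W :=
      le_inf (Finset.sup_mono Finset.inter_subset_left)
        (Finset.sup_mono Finset.inter_subset_right)
    have h3 : Module.finrank ℝ ↥((J ∩ K).sup W)
        ≤ Module.finrank ℝ ((J.sup W ⊓ K.sup W : Submodule ℝ (Fin N → ℝ))) :=
      Submodule.finrank_mono h2
    have h4 := Submodule.finrank_sup_add_finrank_inf_eq (J.sup W) (K.sup W)
    rw [h1]
    omega
  have hcard : ((J ∪ K).card : ℤ) + ((J ∩ K).card : ℤ) = (J.card : ℤ) + (K.card : ℤ) := by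
    have := Finset.card_union_add_card_inter J K
    omega
  simp only [subCodim]
  rw [hvs J, hvs K, hvs (J ∪ K), hvs (J ∩ K)]
  omega

/-- **Lemma 3.5, Part 1** (extending Sturmfels). For finite sets
`S₁, …, S_I ⊆ ℤ^N` there is a unique minimal subset achieving the maximal
codimension; in particular this subcollection is essential (every proper subcollection
has strictly smaller codimension). -/
theorem stmt17 (N I : ℕ) (Sg : Fin I → Finset (Fin N → ℤ))
    (hSg : ∀ i, (Sg i).Nonempty) :
    ∃ J₀ : Finset (Fin I),
      (∀ J : Finset (Fin I), subCodim Sg J ≤ subCodim Sg J₀) ∧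
      (∀ J : Finset (Fin I), (∀ K : Finset (Fin I), subCodim Sg K ≤ subCodim Sg J) →
        J₀ ⊆ J) ∧
      (∀ J : Finset (Fin I), J ⊆ J₀ → J ≠ J₀ → subCodim Sg J < subCodim Sg J₀) := by
  classical
  obtain ⟨Jmax, hJmax⟩ := Finite.exists_max (subCodim Sg)
  set S : Finset (Finset (Fin I)) :=
    Finset.univ.filter (fun J => ∀ K, subCodim Sg K ≤ subCodim Sg J) with hS
  have hSne : S.Nonempty := ⟨Jmax, by simp [hS, hJmax]⟩
  obtain ⟨J₀, hJ₀S, hmin⟩ := S.exists_min_image Finset.card hSne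
  have hJ₀max : ∀ K, subCodim Sg K ≤ subCodim Sg J₀ := by
    simpa [hS] using hJ₀S
  have hsubsets : ∀ J : Finset (Fin I),
      (∀ K, subCodim Sg K ≤ subCodim Sg J) → J₀ ⊆ J := by
    intro J hJ
    have hsup := subCodim_supermodular Sg hSg J₀ J
    have h1 : subCodim Sg (J₀ ∪ J) ≤ subCodim Sg J₀ := hJ₀max _
    have h2 : subCodim Sg J₀ = subCodim Sg J := le_antisymm (hJ _) (hJ₀max _)
    have hintermax : ∀ K, subCodim Sg K ≤ subCodim Sg (J₀ ∩ J) := by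
      intro K
      have := hJ₀max K
      omega
    have hinterS : J₀ ∩ J ∈ S := by simp [hS, hintermax]
    have hcard := hmin _ hinterS
    have : J₀ ∩ J = J₀ :=
      Finset.eq_of_subset_of_card_le Finset.inter_subset_left hcard
    exact Finset.inter_eq_left.mp this
  refine ⟨J₀, hJ₀max, hsubsets, ?_⟩
  intro J hJsub hJne
  rcases lt_or_eq_of_le (hJ₀max J) with h | h
  · exact h
  · exfalso
    apply hJne
    have hJmax' : ∀ K, subCodim Sg K ≤ subCodim Sg J := fun K => (hJ₀max K).trans h.ge
    exact Finset.Subset.antisymm hJsub (hsubsets J hJmax')
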